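/- Let $F:\mathbb{R}^d\to\mathbb{R}$ be a Łojasiewicz function, $K\subset\mathbb{R}^d$ compact, and $\ell$ a critical level of $F$ on $K$. Then there exist an open set $U\supset F^{-1}(\{\ell\})\cap K$, a constant $L>0$ and $\theta\in[1/2,1)$ such that $|\nabla F(y)|\ge L|F(y)-\ell|^\theta$ for all $y\in U$. -/
import Mathlib


/-- `F` is a Łojasiewicz function: around every critical point the Łojasiewicz
inequality holds with some constant `L > 0` and exponent `θ ∈ [1/2, 1)`. -/
def IsLojasiewicz {d : ℕ} (F : EuclideanSpace ℝ (Fin d) → ℝ) : Prop :=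
  ∀ x, gradient F x = 0 →
    ∃ (U : Set (EuclideanSpace ℝ (Fin d))) (L θ : ℝ),
      IsOpen U ∧ x ∈ U ∧ 0 < L ∧ θ ∈ Set.Ico (1/2 : ℝ) 1 ∧
      ∀ y ∈ U, L * |F y - F x| ^ θ ≤ ‖gradient F y‖

theorem lojasiewicz_on_level_set {d : ℕ} (F : EuclideanSpace ℝ (Fin d) → ℝ)
    (hF : ContDiff ℝ 2 F) (hLoj : IsLojasiewicz F)
    (K : Set (EuclideanSpace ℝ (Fin d))) (hK : IsCompact K)
    (ℓ : ℝ) (hℓ : ∃ x ∈ K, gradient F x = 0 ∧ F x = ℓ) :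
    ∃ (U : Set (EuclideanSpace ℝ (Fin d))) (L θ : ℝ),
      IsOpen U ∧ F ⁻¹' {ℓ} ∩ K ⊆ U ∧ 0 < L ∧ θ ∈ Set.Ico (1/2 : ℝ) 1 ∧
      ∀ y ∈ U, L * |F y - ℓ| ^ θ ≤ ‖gradient F y‖ := by
  classical
  set S : Set (EuclideanSpace ℝ (Fin d)) := F ⁻¹' {ℓ} ∩ K with hSdef
  have hFc : Continuous F := hF.continuous
  have hgc : Continuous (gradient F) := by
    have h1 : Continuous (fderiv ℝ F) := hF.continuous_fderiv (by norm_num)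
    exact ((InnerProductSpace.toDual ℝ (EuclideanSpace ℝ (Fin d))).symm.continuous).comp h1
  have hgnc : Continuous fun y => ‖gradient F y‖ := hgc.norm
  have hSc : IsCompact S := hK.inter_left (isClosed_singleton.preimage hFc)
  obtain ⟨x₀, hx₀K, hx₀g, hx₀F⟩ := hℓ
  have hx₀S : x₀ ∈ S := ⟨by simp [hx₀F], hx₀K⟩
  -- local inequality around each point of S
  have key : ∀ x ∈ S, ∃ (U : Set (EuclideanSpace ℝ (Fin d))) (L θ : ℝ),
      IsOpen U ∧ x ∈ U ∧ 0 < L ∧ θ ∈ Set.Ico (1/2 : ℝ) 1 ∧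
      ∀ y ∈ U, L * |F y - ℓ| ^ θ ≤ ‖gradient F y‖ := by
    intro x hx
    have hFx : F x = ℓ := hx.1
    by_cases hcrit : gradient F x = 0
    · obtain ⟨U, L, θ, hUo, hxU, hL, hθ, hineq⟩ := hLoj x hcrit
      exact ⟨U, L, θ, hUo, hxU, hL, hθ, fun y hy => by
        have := hineq y hy; rwa [hFx] at this⟩
    · -- noncritical point: use the open set where |F y - ℓ|^(1/2) < ‖grad F y‖
      refine ⟨{y | |F y - ℓ| ^ (1/2 : ℝ) < ‖gradient F y‖}, 1, 1/2, ?_, ?_, one_pos,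
        ⟨le_refl _, by norm_num⟩, ?_⟩
      · apply isOpen_lt _ hgnc
        have habs : Continuous fun y => |F y - ℓ| := (hFc.sub continuous_const).abs
        exact continuous_iff_continuousAt.2 fun y =>
          (Real.continuousAt_rpow_const _ _ (Or.inr (by norm_num))).comp habs.continuousAt
      · simp only [Set.mem_setOf_eq, hFx, sub_self, abs_zero]
        rw [Real.zero_rpow (by norm_num)]
        exact norm_pos_iff.mpr hcrit
      · intro y hy
        have hy' : |F y - ℓ| ^ (1/2 : ℝ) < ‖gradient F y‖ := hy
        simpa using hy'.le
  choose! U L θ hUo hxU hL hθ hineq using key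
  obtain ⟨t, htS, hcover⟩ := hSc.elim_nhds_subcover U
    (fun x hx => (hUo x hx).mem_nhds (hxU x hx))
  have ht : t.Nonempty := by
    obtain ⟨i, hi, _⟩ := Set.mem_iUnion₂.1 (hcover hx₀S)
    exact ⟨i, hi⟩
  set L0 : ℝ := t.inf' ht L with hL0
  set θ0 : ℝ := t.sup' ht θ with hθ0
  have hL0pos : 0 < L0 := by
    rw [hL0, Finset.lt_inf'_iff]
    exact fun i hi => hL i (htS i hi)
  have hθ0lt : θ0 < 1 := by
    rw [hθ0, Finset.sup'_lt_iff]
    exact fun i hi => (hθ i (htS i hi)).2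
  have hθ0ge : (1/2 : ℝ) ≤ θ0 := by
    obtain ⟨i, hi⟩ := ht
    exact le_trans (hθ i (htS i hi)).1 (Finset.le_sup' θ hi)
  have hθ0pos : 0 < θ0 := lt_of_lt_of_le (by norm_num) hθ0ge
  refine ⟨(⋃ x ∈ t, U x) ∩ {y | |F y - ℓ| < 1}, L0, θ0, ?_, ?_, hL0pos, ⟨hθ0ge, hθ0lt⟩, ?_⟩
  · refine IsOpen.inter (isOpen_biUnion fun i hi => hUo i (htS i hi)) ?_
    exact isOpen_lt (hFc.sub continuous_const).abs continuous_const
  · intro y hy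
    refine ⟨hcover hy, ?_⟩
    have : F y = ℓ := hy.1
    simp [this]
  · rintro y ⟨hy1, hy2⟩
    obtain ⟨i, hi, hyi⟩ := Set.mem_iUnion₂.1 hy1
    have hmain := hineq i (htS i hi) y hyi
    have habs : (0:ℝ) ≤ |F y - ℓ| := abs_nonneg _
    have hlt1 : |F y - ℓ| < 1 := hy2
    have hpow : |F y - ℓ| ^ θ0 ≤ |F y - ℓ| ^ θ i := by
      rcases eq_or_lt_of_le habs with h0 | h0
      · rw [← h0, Real.zero_rpow (ne_of_gt hθ0pos),
          Real.zero_rpow (ne_of_gt (lt_of_lt_of_le (by norm_num) (hθ i (htS i hi)).1))]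
      · exact Real.rpow_le_rpow_of_exponent_ge h0 hlt1.le (Finset.le_sup' θ hi)
    calc L0 * |F y - ℓ| ^ θ0 ≤ L i * |F y - ℓ| ^ θ i := by
          apply mul_le_mul (Finset.inf'_le L hi) hpow (Real.rpow_nonneg habs _)
            (hL i (htS i hi)).le
      _ ≤ ‖gradient F y‖ := hmain
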